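/- arXiv:1503.00965 — 11 statements merged into one kernel-verified Lean document; each statement's English description precedes it below -/
import Mathlib

section
/- If c is a proper χ-coloring of a graph G and X ⊆ V(G) is a terminal section of D_c (no arc of D_c leaves X), then the coloring obtained from c by adding 1 (mod χ) to the color of each vertex of X is again a proper coloring of G. -/
/-- Terminal recoloring of a terminal section keeps the coloring proper. -/
theorem terminal_recoloring_proper {V : Type} (G : SimpleGraph V) (χ : ℕ)
    (c : V → ZMod χ) (hc : ∀ u w, G.Adj u w → c u ≠ c w)
    (X : Set V) [DecidablePred (· ∈ X)]
    (hX : ∀ x y, x ∈ X → y ∉ X → ¬(G.Adj x y ∧ c y = c x + 1)) :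
    ∀ u w, G.Adj u w →
      (if u ∈ X then c u + 1 else c u) ≠ (if w ∈ X then c w + 1 else c w) := by
  intro u w h
  by_cases hu : u ∈ X <;> by_cases hw : w ∈ X <;> simp [hu, hw]
  · exact hc u w h
  · intro he; exact hX u w hu hw ⟨h, he.symm⟩
  · intro he; exact hX w u hw hu ⟨h.symm, he⟩
  · exact hc u w h
end

section
/- Let X ⊆ V(G) be an initial section of D_c for a proper χ-coloring c of G. After performing the initial recoloring of X, no arc of the new digraph D_{c'} goes from X to V(G)∖X; that is, X becomes a terminal section of D_{c'}. -/
/-- After the initial recoloring of an initial section `X`, no arc of the new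
digraph leaves `X`: `X` becomes a terminal section. -/
theorem initial_section_becomes_terminal {V : Type} (G : SimpleGraph V) (χ : ℕ)
    (c : V → ZMod χ) (hc : ∀ u w, G.Adj u w → c u ≠ c w)
    (X : Set V) [DecidablePred (· ∈ X)]
    (hX : ∀ x y, x ∉ X → y ∈ X → ¬(G.Adj x y ∧ c y = c x + 1)) :
    ∀ x y, x ∈ X → y ∉ X →
      ¬(G.Adj x y ∧
        (if y ∈ X then c y - 1 else c y) = (if x ∈ X then c x - 1 else c x) + 1) := by
  rintro x y hx hy ⟨hadj, heq⟩
  rw [if_neg hy, if_pos hx, sub_add_cancel] at heq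
  exact hc x y hadj heq.symm
end

section
/- Let G be a connected graph, c a proper χ-coloring of G, and X a nonempty subset of V(G). Then there exists a proper χ-coloring c' of G that agrees with c on X such that every vertex of G is the beginning of a directed path in D_{c'} ending in X (possibly of length 0). -/
/-!
Let `R` be the set of vertices that reach `X` in `D_c`. If `R ≠ V`, connectivity gives edges
`ab` with `a ∉ R`, `b ∈ R`; let `D` be the set of their colour differences `c b - c a`, so
`1 ∉ D`. In `ℤ/χℤ` a finite nonempty set avoiding `1` contains some `d` with `d - 1 ∉ D`.
Adding `d - 1` to the colours outside `R` keeps the colouring proper (precisely because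
`d - 1 ∉ D`), fixes `R` and all its paths, and turns an edge of difference `d` into an arc, so
`R` grows. A colouring minimising `|V \ R|` therefore has `R = V`.
-/

theorem ZMod.exists_mem_sub_one_notMem {χ : ℕ} {D : Set (ZMod χ)} (hD : D.Finite)
    (hne : D.Nonempty) (h1 : (1 : ZMod χ) ∉ D) : ∃ d ∈ D, d - 1 ∉ D := by
  by_contra! hclosed
  obtain ⟨d₀, hd₀⟩ := hne
  -- `D` would contain every `d₀ - n`: infinitely many points if `χ = 0`, and `1` otherwise.
  have hsub : ∀ n : ℕ, d₀ - n ∈ D := by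
    intro n
    induction n with
    | zero => simpa using hd₀
    | succ n ih => simpa [sub_sub] using hclosed _ ih
  rcases χ.eq_zero_or_pos with rfl | hχ
  · exact hD.not_infinite <| Set.infinite_of_injective_forall_mem
      (fun m n h => Nat.cast_injective (sub_right_injective h)) hsub
  · have : NeZero χ := ⟨hχ.ne'⟩
    exact h1 (by simpa using hsub (d₀ - 1).val)

namespace SimpleGraph

variable {V : Type*} (G : SimpleGraph V) {χ : ℕ}

/-- The arc relation of the digraph `D_c`. -/
def colorArc (c : V → ZMod χ) (a b : V) : Prop :=
  G.Adj a b ∧ c b = c a + 1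

def reachSet (c : V → ZMod χ) (X : Set V) : Set V :=
  {v | ∃ t ∈ X, Relation.ReflTransGen (G.colorArc c) v t}

variable {G} {c c₁ : V → ZMod χ} {X S : Set V}

theorem subset_reachSet : X ⊆ G.reachSet c X :=
  fun x hx => ⟨x, hx, .refl⟩

theorem mem_reachSet_of_colorArc {a b : V} (hab : G.colorArc c a b) (hb : b ∈ G.reachSet c X) :
    a ∈ G.reachSet c X :=
  let ⟨t, ht, hbt⟩ := hb
  ⟨t, ht, .head hab hbt⟩

theorem reachSet_subset_of_eqOn (h : Set.EqOn c₁ c (G.reachSet c X)) :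
    G.reachSet c X ⊆ G.reachSet c₁ X := by
  rintro v ⟨t, ht, hvt⟩
  suffices ∀ a, Relation.ReflTransGen (G.colorArc c) a t → Relation.ReflTransGen (G.colorArc c₁) a t from
    ⟨t, ht, this v hvt⟩
  intro a hat
  induction hat using Relation.ReflTransGen.head_induction_on with
  | refl => exact .refl
  | head hab hbt ih =>
    have hb : _ ∈ G.reachSet c X := ⟨t, ht, hbt⟩
    refine .head ⟨hab.1, ?_⟩ ih
    rw [h hb, h (mem_reachSet_of_colorArc hab hb), hab.2]

theorem exists_chain_of_mem_reachSet {v : V} (hv : v ∈ G.reachSet c X) :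
    ∃ l : List V, l ≠ [] ∧ l.IsChain (G.colorArc c) ∧ l.head? = some v ∧
      ∃ t ∈ X, l.getLast? = some t := by
  obtain ⟨t, ht, hvt⟩ := hv
  obtain ⟨l, hne, hl, hhead, hlast⟩ := List.exists_isChain_ne_nil_of_relationReflTransGen hvt
  exact ⟨l, hne, hl, hhead ▸ List.head?_eq_some_head hne, t, ht,
    hlast ▸ List.getLast?_eq_some_getLast hne⟩

theorem exists_adj_notMem_mem (hG : G.Connected) {S : Set V} {a b : V} (ha : a ∉ S) (hb : b ∈ S) :
    ∃ u w, G.Adj u w ∧ u ∉ S ∧ w ∈ S := by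
  obtain ⟨d, -, hd⟩ := (hG.preconnected a b).some.exists_boundary_dart Sᶜ ha (by simpa using hb)
  exact ⟨d.fst, d.snd, d.adj, hd.1, by simpa using hd.2⟩

theorem adj_ite_add_ne [DecidablePred (· ∈ S)] (hc : ∀ u w, G.Adj u w → c u ≠ c w)
    {s : ZMod χ} (hs : ∀ a b, G.Adj a b → a ∉ S → b ∈ S → c b - c a ≠ s) :
    ∀ u w, G.Adj u w → (if u ∈ S then c u else c u + s) ≠ (if w ∈ S then c w else c w + s) := by
  intro u w huw
  by_cases hu : u ∈ S <;> by_cases hw : w ∈ S <;> simp only [hu, hw, if_true, if_false]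
  · exact hc u w huw
  · exact fun h => hs w u huw.symm hw hu (by rw [h]; ring)
  · exact fun h => hs u w huw hu hw (by rw [← h]; ring)
  · exact fun h => hc u w huw (add_right_cancel h)

theorem exists_recoloring_reachSet_ssubset [Finite V] (hG : G.Connected)
    (hc : ∀ u w, G.Adj u w → c u ≠ c w) (hX : X.Nonempty) (hR : G.reachSet c X ≠ Set.univ) :
    ∃ c₁ : V → ZMod χ, (∀ u w, G.Adj u w → c₁ u ≠ c₁ w) ∧ Set.EqOn c₁ c (G.reachSet c X) ∧
      G.reachSet c X ⊂ G.reachSet c₁ X := by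
  classical
  set R := G.reachSet c X
  obtain ⟨v, hv⟩ := (Set.ne_univ_iff_exists_notMem R).1 hR
  obtain ⟨x, hx⟩ := hX
  obtain ⟨u, w, huw, hu, hw⟩ := exists_adj_notMem_mem hG hv (subset_reachSet hx)
  set D : Set (ZMod χ) :=
    (fun p : V × V => c p.2 - c p.1) '' {p | G.Adj p.1 p.2 ∧ p.1 ∉ R ∧ p.2 ∈ R}
  have h1D : (1 : ZMod χ) ∉ D := by
    rintro ⟨⟨a, b⟩, ⟨hab, ha, hb⟩, h⟩
    exact ha (mem_reachSet_of_colorArc ⟨hab, by rw [← h]; ring⟩ hb)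
  obtain ⟨_, ⟨⟨a, b⟩, ⟨hab, ha, hb⟩, rfl⟩, hd⟩ := ZMod.exists_mem_sub_one_notMem (D := D)
    ((Set.toFinite _).image _) ⟨_, (u, w), ⟨huw, hu, hw⟩, rfl⟩ h1D
  set c₁ : V → ZMod χ := fun v => if v ∈ R then c v else c v + (c b - c a - 1)
  have hc₁R : Set.EqOn c₁ c R := fun v hv => if_pos hv
  have ha₁ : a ∈ G.reachSet c₁ X := by
    refine mem_reachSet_of_colorArc ⟨hab, ?_⟩ (reachSet_subset_of_eqOn hc₁R hb)
    simp only [c₁, if_pos hb, if_neg ha]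
    ring
  refine ⟨c₁, adj_ite_add_ne hc ?_, hc₁R, ?_⟩
  · exact fun a b hab ha hb h => hd ⟨(a, b), ⟨hab, ha, hb⟩, h⟩
  · exact Set.ssubset_iff_of_subset (reachSet_subset_of_eqOn hc₁R) |>.2 ⟨a, ha₁, ha⟩

end SimpleGraph

open SimpleGraph in
/-- For any subset `X`, there is a proper coloring agreeing with `c` on `X`
such that every vertex begins a directed path of `D_{c'}` ending in `X`. -/
theorem reachable_set {V : Type} [Fintype V] (G : SimpleGraph V) (hG : G.Connected)
    (χ : ℕ) (c : V → ZMod χ) (hc : ∀ u w, G.Adj u w → c u ≠ c w)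
    (X : Set V) (hXne : X.Nonempty) :
    ∃ c' : V → ZMod χ,
      (∀ u w, G.Adj u w → c' u ≠ c' w) ∧
      (∀ x ∈ X, c' x = c x) ∧
      ∀ v : V, ∃ l : List V, l ≠ [] ∧
        l.Chain' (fun a b => G.Adj a b ∧ c' b = c' a + 1) ∧
        l.head? = some v ∧ ∃ t ∈ X, l.getLast? = some t := by
  obtain ⟨c', ⟨hc', hc'X⟩, hmin⟩ := exists_minimalFor_of_wellFoundedLT
    (fun c' : V → ZMod χ => (∀ u w, G.Adj u w → c' u ≠ c' w) ∧ Set.EqOn c' c X)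
    (fun c' => (G.reachSet c' X)ᶜ.ncard) ⟨c, hc, Set.eqOn_refl _ _⟩
  have hall : G.reachSet c' X = Set.univ := by
    by_contra hR
    obtain ⟨c₁, hc₁, hc₁R, hgrow⟩ := exists_recoloring_reachSet_ssubset hG hc' hXne hR
    have hlt : (G.reachSet c₁ X)ᶜ.ncard < (G.reachSet c' X)ᶜ.ncard :=
      Set.ncard_lt_ncard (compl_lt_compl_iff_lt.2 hgrow)
    exact hlt.not_ge (hmin ⟨hc₁, (hc₁R.mono subset_reachSet).trans hc'X⟩ hlt.le)
  exact ⟨c', hc', hc'X, fun v => exists_chain_of_mem_reachSet (hall ▸ Set.mem_univ v)⟩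
end

section
/- If a graph G admits a proper χ(G)-coloring c such that the digraph D_c contains a directed cycle, then G admits a proper χ(G)-coloring c' such that every vertex of G is the beginning of a directed path on χ(G) vertices in D_{c'} (equivalently, every vertex is the beginning of a colorful path). -/
/-!
Let `x` lie on a directed cycle of `D_c` and let `U` be the set of vertices from which `x` can be
reached in `D_c`. Adding `1` to the colour of every vertex outside `U` keeps `c` proper and keeps
every arc inside `U`, so `U` can only grow. If `U ≠ V`, pick an edge `w u` with `w ∉ U`, `u ∈ U`:
after at most `χ - 1` such shifts it becomes an arc `w → u`, and `U` grows strictly. Hence a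
colouring with maximal `U` has `U = V`, so every vertex has an out-neighbour in `D_c`, and
following out-neighbours yields walks on `χ` vertices.
-/

/-- A directed cycle: a closed walk of positive length in the digraph `D`. -/
def HasDCycle {V : Type} (D : V → V → Prop) : Prop :=
  ∃ (x : V) (l : List V), List.Chain D x (l ++ [x])

open Relation

theorem HasDCycle.exists_transGen {V : Type} {D : V → V → Prop} (h : HasDCycle D) :
    ∃ x, TransGen D x x := by
  obtain ⟨x, l, hl⟩ := h
  refine ⟨x, TransGen.head'_iff.2 ?_⟩
  match l, hl with
  | [], hl => exact ⟨x, List.isChain_pair.1 hl, .refl⟩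
  | y :: t, hl =>
    obtain ⟨hxy, hyx⟩ := List.isChain_cons_cons.1 hl
    exact ⟨y, hxy, List.relationReflTransGen_of_exists_isChain_cons _ hyx (by simp)⟩

theorem exists_isChain_head_length {α : Type*} {r : α → α → Prop} (hr : ∀ a, ∃ b, r a b)
    (n : ℕ) (a : α) : ∃ l : List α, l.IsChain r ∧ l.head? = some a ∧ l.length = n + 1 := by
  induction n generalizing a with
  | zero => exact ⟨[a], .singleton a, rfl, rfl⟩
  | succ n ih =>
    obtain ⟨b, hab⟩ := hr a
    obtain ⟨l, hl, hlb, hlen⟩ := ih b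
    obtain ⟨t, rfl⟩ : ∃ t, l = b :: t := by cases l <;> simp_all
    exact ⟨a :: b :: t, .cons_cons hab hl, rfl, by simpa using hlen⟩

namespace ColorfulPath

variable {V : Type} (G : SimpleGraph V) {χ : ℕ}

def IsProper (c : V → ZMod χ) : Prop := ∀ u w, G.Adj u w → c u ≠ c w

/-- The arcs of the digraph `D_c`. -/
def Arc (c : V → ZMod χ) (a b : V) : Prop := G.Adj a b ∧ c b = c a + 1

def reaching (c : V → ZMod χ) (x : V) : Set V := {v | ReflTransGen (Arc G c) v x}

open Classical in
noncomputable def shiftOutside (c : V → ZMod χ) (U : Set V) (v : V) : ZMod χ :=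
  if v ∈ U then c v else c v + 1

variable {G}

theorem exists_natCast_add_of_transGen {c : V → ZMod χ} {a b : V} (h : TransGen (Arc G c) a b) :
    ∃ n : ℕ, 0 < n ∧ c b = c a + n := by
  induction h with
  | single hab => exact ⟨1, one_pos, by simpa using hab.2⟩
  | tail _ hbd ih =>
    obtain ⟨n, hn, heq⟩ := ih
    exact ⟨n + 1, n.succ_pos, by rw [hbd.2, heq]; push_cast; ring⟩

theorem neZero_of_transGen {c : V → ZMod χ} {x : V} (h : TransGen (Arc G c) x x) : NeZero χ := by
  obtain ⟨n, hn, heq⟩ := exists_natCast_add_of_transGen h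
  have hdvd : χ ∣ n := (ZMod.natCast_eq_zero_iff n χ).1 (by simpa using heq)
  exact ⟨(Nat.pos_of_dvd_of_pos hdvd hn).ne'⟩

theorem IsProper.shiftOutside {c : V → ZMod χ} (hc : IsProper G c) {U : Set V}
    (hU : ∀ a b, Arc G c a b → b ∈ U → a ∈ U) : IsProper G (shiftOutside c U) := by
  intro a b hab
  -- a clash on an edge leaving `U` would be an arc entering `U`
  have hin_out : ∀ {a b}, G.Adj a b → a ∈ U → b ∉ U → c a ≠ c b + 1 :=
    fun hab ha hb heq => hb (hU _ _ ⟨hab.symm, heq⟩ ha)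
  unfold ColorfulPath.shiftOutside
  by_cases ha : a ∈ U <;> by_cases hb : b ∈ U <;> simp only [ha, hb, if_true, if_false]
  · exact hc a b hab
  · exact hin_out hab ha hb
  · exact (hin_out hab.symm hb ha).symm
  · simpa using hc a b hab

theorem Arc.shiftOutside {c : V → ZMod χ} {U : Set V} {a b : V} (hab : Arc G c a b) (ha : a ∈ U)
    (hb : b ∈ U) : Arc G (shiftOutside c U) a b :=
  ⟨hab.1, by simpa [ColorfulPath.shiftOutside, ha, hb] using hab.2⟩

theorem reaching_subset_shiftOutside (c : V → ZMod χ) (x : V) :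
    reaching G c x ⊆ reaching G (shiftOutside c (reaching G c x)) x := by
  intro v hv
  induction hv using ReflTransGen.head_induction_on with
  | refl => exact .refl
  | head hvw hwx ih => exact .head (hvw.shiftOutside (hwx.head hvw) hwx) ih

theorem transGen_shiftOutside {c : V → ZMod χ} {x : V} (hx : TransGen (Arc G c) x x) :
    TransGen (Arc G (shiftOutside c (reaching G c x))) x x := by
  obtain ⟨y, hxy, hyx⟩ := TransGen.head'_iff.1 hx
  exact TransGen.head'_iff.2
    ⟨y, hxy.shiftOutside .refl hyx, reaching_subset_shiftOutside c x hyx⟩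

/-- `n` is the number of shifts outside the reaching set after which `w u` becomes an arc. -/
theorem exists_reaching_ssubset {c : V → ZMod χ} {x : V} (hc : IsProper G c)
    (hx : TransGen (Arc G c) x x) {w u : V} (hwu : G.Adj w u) (hw : w ∉ reaching G c x)
    (hu : u ∈ reaching G c x) (n : ℕ) (hn : c u = c w + 1 + n) :
    ∃ c' : V → ZMod χ, IsProper G c' ∧ TransGen (Arc G c') x x ∧
      reaching G c x ⊂ reaching G c' x := by
  induction n generalizing c with
  | zero => exact absurd (ReflTransGen.head ⟨hwu, by simpa using hn⟩ hu) hw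
  | succ n ih =>
    set c' := shiftOutside c (reaching G c x)
    have hc' : IsProper G c' := hc.shiftOutside fun a b hab hb => hb.head hab
    by_cases heq : reaching G c' x = reaching G c x
    · have hn' : c' u = c' w + 1 + n := by
        simp only [c', ColorfulPath.shiftOutside, if_pos hu, if_neg hw, hn]
        push_cast
        ring
      rw [← heq]
      exact ih hc' (transGen_shiftOutside hx) (heq ▸ hw) (heq ▸ hu) hn'
    · exact ⟨c', hc', transGen_shiftOutside hx,
        (reaching_subset_shiftOutside c x).ssubset_of_ne (Ne.symm heq)⟩

theorem exists_reaching_eq_univ [Finite V] (hG : G.Connected) {c : V → ZMod χ} {x : V}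
    (hc : IsProper G c) (hx : TransGen (Arc G c) x x) :
    ∃ c' : V → ZMod χ, IsProper G c' ∧ TransGen (Arc G c') x x ∧ reaching G c' x = .univ := by
  have := neZero_of_transGen hx
  obtain ⟨_, -, hmax⟩ := Finite.exists_le_maximal
    (p := fun U => ∃ c' : V → ZMod χ, IsProper G c' ∧ TransGen (Arc G c') x x ∧
      reaching G c' x = U) ⟨c, hc, hx, rfl⟩
  obtain ⟨c', hc', hx', rfl⟩ := hmax.prop
  refine ⟨c', hc', hx', by_contra fun hne => ?_⟩
  obtain ⟨v, hv⟩ := (Set.ne_univ_iff_exists_notMem _).1 hne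
  obtain ⟨d, -, hd₁, hd₂⟩ := (hG.preconnected x v).some.exists_boundary_dart _ .refl hv
  obtain ⟨n, hn⟩ := ZMod.natCast_zmod_surjective (c' d.fst - c' d.snd - 1)
  obtain ⟨c'', hc'', hx'', hlt⟩ :=
    exists_reaching_ssubset hc' hx' d.adj.symm hd₂ hd₁ n (by rw [hn]; ring)
  exact hmax.not_ssuperset ⟨c'', hc'', hx'', rfl⟩ hlt

theorem exists_arc_of_reaching_eq_univ {c : V → ZMod χ} {x : V} (hx : TransGen (Arc G c) x x)
    (huniv : reaching G c x = .univ) (v : V) : ∃ w, Arc G c v w := by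
  have hv : v ∈ reaching G c x := huniv ▸ Set.mem_univ v
  rcases hv.cases_head with rfl | ⟨w, hvw, -⟩
  · exact (TransGen.head'_iff.1 hx).imp fun _ => And.left
  · exact ⟨w, hvw⟩

end ColorfulPath

theorem colorful_from_dcycle_general {V : Type} [Fintype V] (G : SimpleGraph V)
    (hG : G.Connected) (χ : ℕ)
    (c : V → ZMod χ) (hc : ∀ u w, G.Adj u w → c u ≠ c w)
    (hcyc : HasDCycle (fun a b => G.Adj a b ∧ c b = c a + 1)) :
    ∃ c' : V → ZMod χ,
      (∀ u w, G.Adj u w → c' u ≠ c' w) ∧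
      ∀ v : V, ∃ l : List V,
        l.Chain' (fun a b => G.Adj a b ∧ c' b = c' a + 1) ∧
        l.head? = some v ∧ l.length = χ := by
  obtain ⟨x, hx⟩ := hcyc.exists_transGen
  have := ColorfulPath.neZero_of_transGen (G := G) hx
  obtain ⟨c', hc', hx', huniv⟩ := ColorfulPath.exists_reaching_eq_univ hG hc hx
  refine ⟨c', hc', fun v => ?_⟩
  obtain ⟨l, hl, hhead, hlen⟩ :=
    exists_isChain_head_length (ColorfulPath.exists_arc_of_reaching_eq_univ hx' huniv) (χ - 1) v
  exact ⟨l, hl, hhead, hlen.trans (Nat.sub_add_cancel NeZero.one_le)⟩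

/-- If some proper `χ(G)`-coloring `c` yields a digraph `D_c` with a directed
cycle, then some proper `χ(G)`-coloring `c'` is such that every vertex begins
a directed path on `χ(G)` vertices in `D_{c'}` (a colorful path). -/
theorem colorful_from_dcycle {V : Type} [Fintype V] (G : SimpleGraph V)
    (hG : G.Connected) (χ : ℕ) (hχ : G.chromaticNumber = χ)
    (c : V → ZMod χ) (hc : ∀ u w, G.Adj u w → c u ≠ c w)
    (hcyc : HasDCycle (fun a b => G.Adj a b ∧ c b = c a + 1)) :
    ∃ c' : V → ZMod χ,
      (∀ u w, G.Adj u w → c' u ≠ c' w) ∧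
      ∀ v : V, ∃ l : List V,
        l.Chain' (fun a b => G.Adj a b ∧ c' b = c' a + 1) ∧
        l.head? = some v ∧ l.length = χ :=
  colorful_from_dcycle_general G hG χ c hc hcyc
end

section
/- Let G be a finite connected graph and c a proper χ(G)-coloring of G. Then either G admits a proper χ(G)-coloring c' such that D_{c'} contains a directed cycle, or for every vertex v of G there exists a proper χ(G)-coloring c'' of G such that D_{c''} is acyclic and v is its unique sink. -/
theorem ZMod.val_sub_one_of_ne_zero {n : ℕ} [NeZero n] {a : ZMod n} (ha : a ≠ 0) :
    (a - 1).val = a.val - 1 := by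
  have hone : (1 : ZMod n).val = 1 := ZMod.val_one'' (ZMod.nontrivial_iff.1 ⟨⟨a, 0, ha⟩⟩)
  rw [ZMod.val_sub (by rw [hone]; exact ZMod.val_pos.2 ha), hone]

theorem ZMod.val_add_one_of_ne_neg_one {n : ℕ} [NeZero n] {a : ZMod n} (ha : a ≠ -1) :
    (a + 1).val = a.val + 1 := by
  have h : a + 1 ≠ 0 := fun h => ha (eq_neg_of_add_eq_zero_left h)
  have hsub := ZMod.val_sub_one_of_ne_zero h
  rw [add_sub_cancel_right] at hsub
  have := ZMod.val_pos.2 h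
  omega

theorem Function.exists_iterate_succ_eq_self {α : Type*} [Finite α] [Nonempty α] (f : α → α) :
    ∃ x n, f^[n + 1] x = x := by
  obtain ⟨x₀⟩ := ‹Nonempty α›
  obtain ⟨a, b, hab, heq⟩ := Finite.exists_ne_map_eq_of_infinite fun n => f^[n] x₀
  wlog hlt : a < b generalizing a b
  · exact this b a hab.symm heq.symm (by omega)
  refine ⟨f^[a] x₀, b - a - 1, ?_⟩
  rw [← Function.iterate_add_apply, show b - a - 1 + 1 + a = b by omega, heq]

def IsSink {V : Type*} (D : V → V → Prop) (x : V) : Prop :=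
  ∀ y, ¬ D x y

theorem exists_isSink_of_not_hasDCycle {V : Type} [Finite V] [Nonempty V] {D : V → V → Prop}
    (h : ¬ HasDCycle D) : ∃ x, IsSink D x := by
  by_contra! hsink
  simp only [IsSink, not_forall, not_not] at hsink
  choose f hf using hsink
  obtain ⟨x, n, hx⟩ := Function.exists_iterate_succ_eq_self f
  refine h ⟨x, (List.range n).map fun i => f^[i + 1] x, ?_⟩
  have hchain : List.IsChain D ((List.range (n + 2)).map fun i => f^[i] x) := by
    refine (List.isChain_map _).2 ((List.isChain_range_succ _ _).2 fun m _ => ?_)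
    rw [Function.iterate_succ_apply']
    exact hf _
  rw [List.range_succ, List.range_succ_eq_map] at hchain
  show List.IsChain D (x :: _)
  simpa [hx, Function.comp_def] using hchain

theorem exists_of_bounded_potential {α : Type*} {P Q : α → Prop} (F : α → ℤ) (B : ℤ)
    (hB : ∀ a, P a → F a ≤ B) (step : ∀ a, P a → ¬ Q a → ∃ b, P b ∧ F a < F b)
    {a : α} (ha : P a) : ∃ b, P b ∧ Q b := by
  induction hn : (B - F a).toNat using Nat.strong_induction_on generalizing a with
  | _ n ih =>
    by_cases hQ : Q a
    · exact ⟨a, ha, hQ⟩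
    obtain ⟨b, hb, hlt⟩ := step a ha hQ
    exact ih _ (by have := hB b hb; omega) hb rfl

namespace SimpleGraph

variable {V : Type*} {G : SimpleGraph V} {k : ℕ}

def colorDigraph (G : SimpleGraph V) (c : V → ZMod k) (a b : V) : Prop :=
  G.Adj a b ∧ c b = c a + 1

def raiseAt [DecidableEq V] (c : V → ZMod k) (s : V) : V → ZMod k :=
  Function.update c s (c s + 1)

section raiseAt

variable [DecidableEq V] {c : V → ZMod k} {s : V}

theorem raiseAt_proper (hc : ∀ u w, G.Adj u w → c u ≠ c w) (hs : IsSink (G.colorDigraph c) s) :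
    ∀ u w, G.Adj u w → raiseAt c s u ≠ raiseAt c s w := by
  intro u w huw
  rcases eq_or_ne u s with rfl | hu
  · simpa [raiseAt, huw.ne'] using fun h => hs w ⟨huw, h.symm⟩
  rcases eq_or_ne w s with rfl | hw
  · simpa [raiseAt, hu] using fun h => hs u ⟨huw.symm, h⟩
  simpa [raiseAt, hu, hw] using hc u w huw

theorem val_raiseAt_sub [NeZero k] (hc : ∀ u w, G.Adj u w → c u ≠ c w)
    (hs : IsSink (G.colorDigraph c) s) {x y : V} (hxy : G.Adj x y) :
    ((raiseAt c s y - raiseAt c s x).val : ℤ) =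
      (c y - c x).val + (if y = s then 1 else 0) - (if x = s then 1 else 0) := by
  rcases eq_or_ne x s with rfl | hx
  · have hne : c y - c x ≠ 0 := sub_ne_zero.2 (hc x y hxy).symm
    rw [raiseAt, Function.update_of_ne hxy.ne', Function.update_self, ← sub_sub,
      ZMod.val_sub_one_of_ne_zero hne]
    simp [hxy.ne', Nat.cast_sub (ZMod.val_pos.2 hne)]
  rcases eq_or_ne y s with rfl | hy
  · have hne : c y - c x ≠ -1 := fun h =>
      hs x ⟨hxy.symm, by rw [← sub_eq_iff_eq_add', ← neg_sub, h, neg_neg]⟩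
    rw [raiseAt, Function.update_of_ne hx, Function.update_self, add_sub_right_comm,
      ZMod.val_add_one_of_ne_neg_one hne]
    simp [hx]
  simp [raiseAt, hx, hy]

end raiseAt

def Walk.ascent (c : V → ZMod k) {a b : V} (w : G.Walk a b) : ℤ :=
  (w.darts.map fun d => ((c d.snd - c d.fst).val : ℤ)).sum

theorem Walk.ascent_le [NeZero k] (c : V → ZMod k) {a b : V} (w : G.Walk a b) :
    w.ascent c ≤ w.length * k := by
  induction w with
  | nil => simp [ascent]
  | @cons x y _ h p ih =>
    have := ZMod.val_lt (c y - c x)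
    simp only [ascent, darts_cons, List.map_cons, List.sum_cons, length_cons] at ih ⊢
    push_cast
    linarith

theorem Walk.ascent_raiseAt [DecidableEq V] [NeZero k] {c : V → ZMod k} {s : V}
    (hc : ∀ u w, G.Adj u w → c u ≠ c w) (hs : IsSink (G.colorDigraph c) s) {a b : V}
    (w : G.Walk a b) :
    w.ascent (raiseAt c s) = w.ascent c + (if b = s then 1 else 0) - (if a = s then 1 else 0) := by
  induction w with
  | nil => simp [ascent]
  | cons h p ih =>
    simp only [ascent, darts_cons, List.map_cons, List.sum_cons] at ih ⊢
    rw [ih, val_raiseAt_sub hc hs h]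
    ring

theorem exists_proper_forall_ne_not_isSink [Fintype V] [DecidableEq V] [NeZero k]
    (hG : G.Connected) (v : V) {c₀ : V → ZMod k} (hc₀ : ∀ u w, G.Adj u w → c₀ u ≠ c₀ w) :
    ∃ c : V → ZMod k, (∀ u w, G.Adj u w → c u ≠ c w) ∧
      ∀ x, x ≠ v → ¬ IsSink (G.colorDigraph c) x := by
  let p : ∀ u, G.Walk v u := fun u => (hG.preconnected v u).some
  refine exists_of_bounded_potential (fun c => ∑ u, (p u).ascent c) (∑ u, (p u).length * k)
    (fun c _ => Finset.sum_le_sum fun u _ => (p u).ascent_le c) ?_ hc₀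
  intro c hc hns
  push Not at hns
  obtain ⟨s, hsv, hs⟩ := hns
  refine ⟨raiseAt c s, raiseAt_proper hc hs, ?_⟩
  simp [Walk.ascent_raiseAt hc hs, hsv.symm, Finset.sum_add_distrib]

end SimpleGraph

/-- Either some proper `χ(G)`-coloring yields a digraph with a directed cycle,
or every vertex `v` is the unique sink of `D_{c''}` for some proper
`χ(G)`-coloring `c''` with `D_{c''}` acyclic. -/
theorem dcycle_or_nice_coloring {V : Type} [Fintype V] (G : SimpleGraph V)
    (hG : G.Connected) (χ : ℕ) (hχ : G.chromaticNumber = χ) :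
    (∃ c' : V → ZMod χ, (∀ u w, G.Adj u w → c' u ≠ c' w) ∧
        HasDCycle (fun a b => G.Adj a b ∧ c' b = c' a + 1)) ∨
    (∀ v : V, ∃ c'' : V → ZMod χ, (∀ u w, G.Adj u w → c'' u ≠ c'' w) ∧
        ¬ HasDCycle (fun a b => G.Adj a b ∧ c'' b = c'' a + 1) ∧
        (∀ y, ¬ (G.Adj v y ∧ c'' y = c'' v + 1)) ∧
        (∀ x, (∀ y, ¬ (G.Adj x y ∧ c'' y = c'' x + 1)) → x = v)) := by
  classical
  refine or_iff_not_imp_left.2 fun hcyc v => ?_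
  push Not at hcyc
  have : Nonempty V := hG.nonempty
  have : NeZero χ := ⟨by
    rintro rfl
    exact not_isEmpty_of_nonempty V (G.chromaticNumber_eq_zero_iff.1 (mod_cast hχ))⟩
  let C := (G.chromaticNumber_le_iff_colorable.1 hχ.le).toColoring (α := ZMod χ) (by simp)
  obtain ⟨c, hc, hnosink⟩ := G.exists_proper_forall_ne_not_isSink hG v fun _ _ => C.valid
  obtain ⟨x, hx⟩ := exists_isSink_of_not_hasDCycle (hcyc c hc)
  obtain rfl : x = v := by_contra fun hxv => hnosink x hxv hx
  exact ⟨c, hc, hcyc c hc, hx, fun y hy => by_contra fun hyx => hnosink y hyx hy⟩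
end

section
/- Let c be a nice χ-coloring of a connected graph G (i.e., D_c is acyclic with a unique sink r) and let (V_1,…,V_k) be the level partition of D_c. Then for every i and every x ∈ V_i, c(x) = c(r) - i + 1 (mod χ); in particular, all vertices in the same level receive the same color. -/
/-- `x` lies in the `i`-th level of the level partition of the (acyclic)
digraph `D`: the longest directed path starting at `x` has `i` vertices. -/
def InLevel {V : Type} (D : V → V → Prop) (x : V) (i : ℕ) : Prop :=
  (∃ l : List V, l.Chain' D ∧ l.head? = some x ∧ l.length = i) ∧
  ¬ (∃ l : List V, l.Chain' D ∧ l.head? = some x ∧ l.length = i + 1)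

/-! A vertex of level `i + 2` has an out-neighbour of level `i + 1`, and the vertices of level `1`
are sinks. So if the colour goes up by one along every arc, walking down from level `i` to the
unique sink `r` takes `i - 1` steps, and `c x = c r - (i - 1)`. -/

namespace InLevel

variable {V : Type} {D : V → V → Prop} {x : V} {i : ℕ}

theorem ne_zero (h : InLevel D x i) : i ≠ 0 := by
  rintro rfl
  obtain ⟨⟨l, -, hhead, hlen⟩, -⟩ := h
  simp [List.length_eq_zero_iff.mp hlen] at hhead

theorem isSink (h : InLevel D x 1) (y : V) : ¬ D x y := fun hxy =>
  h.2 ⟨[x, y], List.isChain_pair.mpr hxy, rfl, rfl⟩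

theorem exists_rel_inLevel (h : InLevel D x (i + 2)) : ∃ y, D x y ∧ InLevel D y (i + 1) := by
  obtain ⟨⟨l, hchain, hhead, hlen⟩, hmax⟩ := h
  obtain ⟨y, t, rfl⟩ : ∃ (y : V) (t : List V), l = x :: y :: t := by
    match l, hlen, hhead with
    | _ :: y :: t, _, rfl => exact ⟨y, t, rfl⟩
  obtain ⟨hxy, hchain⟩ := List.isChain_cons_cons.mp hchain
  refine ⟨y, hxy, ⟨y :: t, hchain, rfl, by simpa using hlen⟩, ?_⟩
  rintro ⟨m, hm, hmhead, hmlen⟩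
  refine hmax ⟨x :: m, List.isChain_cons.mpr ⟨?_, hm⟩, rfl, by simp [hmlen]⟩
  simpa [hmhead] using hxy

theorem apply_eq_of_rel_add_one {R : Type*} [AddCommGroupWithOne R] {f : V → R} {r : V}
    (hf : ∀ a b, D a b → f b = f a + 1) (hsink : ∀ x, (∀ y, ¬ D x y) → x = r) :
    ∀ {i : ℕ} {x : V}, InLevel D x i → f x = f r - i + 1
  | 0, _, h => absurd rfl h.ne_zero
  | 1, x, h => by
    rw [hsink x h.isSink]
    simp
  | i + 1 + 1, x, h => by
    obtain ⟨y, hxy, hy⟩ := h.exists_rel_inLevel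
    rw [eq_sub_of_add_eq (hf x y hxy).symm, apply_eq_of_rel_add_one hf hsink hy]
    push_cast
    abel

end InLevel

theorem nice_coloring_level_color_general {V : Type} (G : SimpleGraph V)
    (χ : ℕ) (c : V → ZMod χ)
    (r : V)
    (hru : ∀ x, (∀ y, ¬ (G.Adj x y ∧ c y = c x + 1)) → x = r) :
    ∀ (i : ℕ) (x : V),
      InLevel (fun a b => G.Adj a b ∧ c b = c a + 1) x i →
      c x = c r - (i : ZMod χ) + 1 :=
  fun _ _ => InLevel.apply_eq_of_rel_add_one (fun _ _ h => h.2) hru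

/-- For a nice coloring, a vertex in level `i` has color `c r - i + 1`:
all vertices of a common level share the same color. -/
theorem nice_coloring_level_color {V : Type} [Fintype V] (G : SimpleGraph V)
    (hG : G.Connected) (χ : ℕ) (c : V → ZMod χ)
    (hc : ∀ u w, G.Adj u w → c u ≠ c w)
    (hacyc : ¬ HasDCycle (fun a b => G.Adj a b ∧ c b = c a + 1))
    (r : V) (hr : ∀ y, ¬ (G.Adj r y ∧ c y = c r + 1))
    (hru : ∀ x, (∀ y, ¬ (G.Adj x y ∧ c y = c x + 1)) → x = r) :
    ∀ (i : ℕ) (x : V),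
      InLevel (fun a b => G.Adj a b ∧ c b = c a + 1) x i →
      c x = c r - (i : ZMod χ) + 1 :=
  nice_coloring_level_color_general G χ c r hru
end

section
/- Let G be a connected graph with chromatic number χ and let c be a nice χ-coloring of G (D_c acyclic with a unique sink). Then the height of the level partition of D_c is at least 2χ - 1. -/
theorem List.IsChain.nodup_of_not_hasDCycle {V : Type} {D : V → V → Prop}
    (hD : ¬HasDCycle D) {l : List V} (hl : l.IsChain D) : l.Nodup := by
  induction l with
  | nil => exact List.nodup_nil
  | cons a t ih =>
    refine List.nodup_cons.mpr ⟨fun ha => hD ?_, ih (List.isChain_cons.mp hl).2⟩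
    obtain ⟨s, u, rfl⟩ := List.append_of_mem ha
    exact ⟨a, s, hl.prefix ⟨u, by simp⟩⟩

section Level

variable {V : Type} {D : V → V → Prop}

def HasChainFrom (D : V → V → Prop) (x : V) (n : ℕ) : Prop :=
  ∃ l : List V, l.IsChain D ∧ l.head? = some x ∧ l.length = n

theorem hasChainFrom_one (x : V) : HasChainFrom D x 1 :=
  ⟨[x], List.isChain_singleton x, rfl, rfl⟩

theorem HasChainFrom.cons {a b : V} {n : ℕ} (hab : D a b) (h : HasChainFrom D b n) :
    HasChainFrom D a (n + 1) := by
  obtain ⟨l, hl, hhead, rfl⟩ := h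
  refine ⟨a :: l, List.isChain_cons.mpr ?_, rfl, rfl⟩
  exact ⟨fun y hy => by rw [hhead] at hy; cases hy; exact hab, hl⟩

theorem HasChainFrom.le_card [Fintype V] (hD : ¬HasDCycle D) {x : V} {n : ℕ}
    (h : HasChainFrom D x n) : n ≤ Fintype.card V := by
  obtain ⟨l, hl, -, rfl⟩ := h
  exact (hl.nodup_of_not_hasDCycle hD).length_le_card

open Classical

/-- The index of the level of `x` in the level partition of `D`. -/
noncomputable def level [Fintype V] (D : V → V → Prop) (x : V) : ℕ :=
  Nat.findGreatest (HasChainFrom D x) (Fintype.card V)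

variable [Fintype V] (hD : ¬HasDCycle D)
include hD

theorem HasChainFrom.le_level {x : V} {n : ℕ} (h : HasChainFrom D x n) : n ≤ level D x :=
  Nat.le_findGreatest (h.le_card hD) h

theorem one_le_level (x : V) : 1 ≤ level D x :=
  (hasChainFrom_one x).le_level hD

theorem hasChainFrom_level (x : V) : HasChainFrom D x (level D x) :=
  Nat.findGreatest_spec ((hasChainFrom_one x).le_card hD) (hasChainFrom_one x)

theorem not_hasChainFrom_level_succ (x : V) : ¬HasChainFrom D x (level D x + 1) := fun h =>
  Nat.findGreatest_is_greatest (Nat.lt_succ_self _) (h.le_card hD) h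

theorem inLevel_level (x : V) : InLevel D x (level D x) :=
  ⟨hasChainFrom_level hD x, not_hasChainFrom_level_succ hD x⟩

theorem level_lt_of_rel {a b : V} (hab : D a b) : level D b < level D a :=
  ((hasChainFrom_level hD b).cons hab).le_level hD

theorem level_eq_one_of_forall_not_rel {x : V} (hx : ∀ y, ¬D x y) : level D x = 1 := by
  refine le_antisymm ?_ (one_le_level hD x)
  by_contra! h
  obtain ⟨_ | ⟨x', _ | ⟨y, t⟩⟩, hl, hhead, hlen⟩ := hasChainFrom_level hD x
  · cases hhead
  · simp only [List.length_singleton] at hlen; omega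
  · obtain rfl : x' = x := Option.some.inj hhead
    exact hx y (List.isChain_cons_cons.mp hl).1

theorem exists_rel_level_eq_succ {x : V} (hx : ∃ y, D x y) :
    ∃ y, D x y ∧ level D x = level D y + 1 := by
  obtain ⟨z, hxz⟩ := hx
  have h2 : 2 ≤ level D x := (one_le_level hD z).trans_lt (level_lt_of_rel hD hxz)
  obtain ⟨_ | ⟨x', _ | ⟨y, t⟩⟩, hl, hhead, hlen⟩ := hasChainFrom_level hD x
  · cases hhead
  · simp only [List.length_singleton] at hlen; omega
  · obtain rfl : x' = x := Option.some.inj hhead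
    obtain ⟨hxy, hyt⟩ := List.isChain_cons_cons.mp hl
    have htail : HasChainFrom D y (t.length + 1) := ⟨y :: t, hyt, rfl, rfl⟩
    have := htail.le_level hD
    have := level_lt_of_rel hD hxy
    exact ⟨y, hxy, by simp only [List.length_cons] at hlen; omega⟩

end Level

theorem Nat.eq_or_add_eq_of_mod_eq {a b k : ℕ} (ha : a < 2 * k) (hb : b < 2 * k)
    (hab : a % k = b % k) : a = b ∨ a + k = b ∨ b + k = a := by
  have hqa : a / k < 2 := Nat.div_lt_of_lt_mul (by omega)
  have hqb : b / k < 2 := Nat.div_lt_of_lt_mul (by omega)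
  have hna := Nat.div_add_mod a k
  have hnb := Nat.div_add_mod b k
  generalize a / k = qa at *
  generalize b / k = qb at *
  interval_cases qa <;> interval_cases qb <;> omega

section NiceColoring

variable {V : Type} [Fintype V] {G : SimpleGraph V} {χ : ℕ} {c : V → ZMod χ} {r : V}

/-- The digraph `D_c`. -/
def colorDigraph (G : SimpleGraph V) (c : V → ZMod χ) (a b : V) : Prop :=
  G.Adj a b ∧ c b = c a + 1

local notation "ℓ" => level (colorDigraph G c)

variable (hacyc : ¬HasDCycle (colorDigraph G c))
  (hru : ∀ x, (∀ y, ¬colorDigraph G c x y) → x = r)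
include hacyc hru

theorem add_level_colorDigraph (x : V) : c x + ℓ x = c r + 1 := by
  induction hn : ℓ x using Nat.strong_induction_on generalizing x with
  | _ n ih =>
  by_cases hsink : ∀ y, ¬colorDigraph G c x y
  · rw [← hn, level_eq_one_of_forall_not_rel hacyc hsink, hru x hsink, Nat.cast_one]
  · push Not at hsink
    obtain ⟨y, hxy, hlevel⟩ := exists_rel_level_eq_succ hacyc hsink
    rw [← hn, hlevel, ← ih _ (by omega) y rfl, hxy.2]
    push_cast
    ring

theorem level_add_pred_ne_of_adj {u v : V} (huv : G.Adj u v) (hχ : 1 ≤ χ) :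
    ℓ u + (χ - 1) ≠ ℓ v := by
  intro h
  have hcast : (ℓ u : ZMod χ) = ℓ v + 1 := by
    rw [← h, Nat.cast_add, Nat.cast_sub hχ, ZMod.natCast_self, Nat.cast_one]; ring
  have harc : colorDigraph G c u v := by
    refine ⟨huv, ?_⟩
    have := (add_level_colorDigraph hacyc hru u).trans (add_level_colorDigraph hacyc hru v).symm
    rw [hcast] at this
    linear_combination -this
  have := level_lt_of_rel hacyc harc
  omega

variable (hc : ∀ u w, G.Adj u w → c u ≠ c w)
include hc

theorem level_ne_of_adj {u v : V} (huv : G.Adj u v) : ℓ u ≠ ℓ v := fun h =>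
  hc u v huv <| add_right_cancel <|
    (add_level_colorDigraph hacyc hru u).trans (h ▸ add_level_colorDigraph hacyc hru v).symm

theorem colorable_pred_of_level_lt (hlt : ∀ x, ℓ x < 2 * χ - 1) : G.Colorable (χ - 1) := by
  have hχ : 2 ≤ χ := by have := one_le_level hacyc r; have := hlt r; omega
  refine ⟨SimpleGraph.Coloring.mk (fun x => ⟨(ℓ x - 1) % (χ - 1), Nat.mod_lt _ (by omega)⟩) ?_⟩
  intro u v huv heq
  have hu := one_le_level hacyc u
  have hv := one_le_level hacyc v
  rcases Nat.eq_or_add_eq_of_mod_eq (by have := hlt u; omega) (by have := hlt v; omega)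
    (Fin.mk.inj_iff.mp heq) with h | h | h
  · exact level_ne_of_adj hacyc hru hc huv (by omega)
  · exact level_add_pred_ne_of_adj hacyc hru huv (by omega) (by omega)
  · exact level_add_pred_ne_of_adj hacyc hru huv.symm (by omega) (by omega)

end NiceColoring

theorem nice_coloring_height_general {V : Type} [Fintype V] (G : SimpleGraph V)
    (χ : ℕ) (hχ : G.chromaticNumber = χ)
    (c : V → ZMod χ) (hc : ∀ u w, G.Adj u w → c u ≠ c w)
    (hacyc : ¬ HasDCycle (fun a b => G.Adj a b ∧ c b = c a + 1))
    (r : V)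
    (hru : ∀ x, (∀ y, ¬ (G.Adj x y ∧ c y = c x + 1)) → x = r) :
    ∃ (x : V) (i : ℕ), 2 * χ - 1 ≤ i ∧
      InLevel (fun a b => G.Adj a b ∧ c b = c a + 1) x i := by
  obtain ⟨x, hx⟩ : ∃ x, 2 * χ - 1 ≤ level (colorDigraph G c) x := by
    by_contra! hlt
    have hle := (colorable_pred_of_level_lt hacyc hru hc hlt).chromaticNumber_le
    have hχ1 : 1 ≤ χ := by have := one_le_level hacyc r; have := hlt r; omega
    rw [hχ, Nat.cast_le] at hle
    omega
  exact ⟨x, _, hx, inLevel_level hacyc x⟩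

/-- For a nice `χ`-coloring of `G`, the height of the level partition of
`D_c` is at least `2χ - 1`. -/
theorem nice_coloring_height {V : Type} [Fintype V] (G : SimpleGraph V)
    (hG : G.Connected) (χ : ℕ) (hχ : G.chromaticNumber = χ)
    (c : V → ZMod χ) (hc : ∀ u w, G.Adj u w → c u ≠ c w)
    (hacyc : ¬ HasDCycle (fun a b => G.Adj a b ∧ c b = c a + 1))
    (r : V) (hr : ∀ y, ¬ (G.Adj r y ∧ c y = c r + 1))
    (hru : ∀ x, (∀ y, ¬ (G.Adj x y ∧ c y = c x + 1)) → x = r) :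
    ∃ (x : V) (i : ℕ), 2 * χ - 1 ≤ i ∧
      InLevel (fun a b => G.Adj a b ∧ c b = c a + 1) x i :=
  nice_coloring_height_general G χ hχ c hc hacyc r hru
end

section
/- For every odd cycle C of length 2k+1 with k ≥ 1 and k ≠ 3 (i.e., C ≠ C_7), there exists a proper 3-coloring of C such that every vertex of C is the beginning of a path on 3 vertices using all three colors. Concretely, writing C = v_0 v_1 … v_k v'_k v'_{k-1} … v'_1 v_0, the coloring c(v_0)=3, c(v_i)=c(v'_i)= i mod 3 for 1 ≤ i ≤ k-1, c(v_k)= k mod 3, c(v'_k)= k+1 mod 3 has this property. -/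
/-
The colour of a vertex is its label mod 3, where going round the cycle the labels
`0, 1, …, k, k + 1, k - 1, …, 1` change by `±1` except for the single step `k + 1 → k - 1`; hence
neighbours never get labels congruent mod 3. Every vertex except
`v'_k` and `v'_1` begins the path through its two successors, whose labels are three consecutive
integers. The vertices `v'_k` and `v'_1` use their two predecessors instead, with labels
`k + 1, k, k - 1` and `1, 2, 3`; the latter needs `v'_3 ≠ v'_k`, that is `k ≠ 3`.
-/

/-- The cycle graph on `ZMod n` (for `n ≥ 3` this is the cycle `C_n`). -/
def cycleG (n : ℕ) : SimpleGraph (ZMod n) where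
  Adj i j := i ≠ j ∧ (i = j + 1 ∨ j = i + 1)
  symm := ⟨fun i j ⟨h1, h2⟩ => ⟨h1.symm, h2.symm⟩⟩
  loopless := ⟨fun i ⟨h, _⟩ => h rfl⟩

namespace SimpleGraph

variable {V α : Type*}

def HasColorfulPathFrom (G : SimpleGraph V) (c : V → α) (v : V) : Prop :=
  ∃ (y : V) (p : G.Walk v y), p.support.length = 3 ∧ (p.support.map c).Nodup

variable {G : SimpleGraph V} {c : V → α} {u v w : V}

lemma HasColorfulPathFrom.of_adj_of_adj (huv : G.Adj u v) (hvw : G.Adj v w)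
    (h : [c u, c v, c w].Nodup) : G.HasColorfulPathFrom c u :=
  ⟨w, .cons huv (.cons hvw .nil), rfl, h⟩

end SimpleGraph

section Cycle

variable {n : ℕ} {α : Type*}

lemma cycleG_adj_add_one {x : ZMod n} (h : x ≠ x + 1) : (cycleG n).Adj x (x + 1) :=
  ⟨h, .inr rfl⟩

lemma cycleG_hasColorfulPathFrom_of_nodup {c : ZMod n → α} {y : ZMod n}
    (h : [c y, c (y + 1), c (y + 2)].Nodup) :
    (cycleG n).HasColorfulPathFrom c y ∧ (cycleG n).HasColorfulPathFrom c (y + 2) := by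
  have hy₂ : y + 2 = y + 1 + 1 := by ring
  obtain ⟨⟨h₀₁, -⟩, h₁₂⟩ : (c y ≠ c (y + 1) ∧ c y ≠ c (y + 2)) ∧ c (y + 1) ≠ c (y + 2) := by
    simpa using h
  have hadj₀₁ := cycleG_adj_add_one (ne_of_apply_ne c h₀₁)
  have hadj₁₂ : (cycleG n).Adj (y + 1) (y + 2) :=
    hy₂ ▸ cycleG_adj_add_one (hy₂ ▸ ne_of_apply_ne c h₁₂)
  exact ⟨.of_adj_of_adj hadj₀₁ hadj₁₂ h,
    .of_adj_of_adj hadj₁₂.symm hadj₀₁.symm (List.nodup_reverse.mpr h)⟩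

variable [NeZero n] {c : ℕ → α}

lemma ZMod.val_add_one (x : ZMod n) : (x + 1).val = (x.val + 1) % n := by
  rw [ZMod.val_add, ZMod.val_one_eq_one_mod, Nat.add_mod_mod]

lemma cycleG_adj_comp_val_ne (h : ∀ j < n, c j ≠ c ((j + 1) % n)) {u w : ZMod n}
    (huw : (cycleG n).Adj u w) : c u.val ≠ c w.val := by
  rcases huw with ⟨-, rfl | rfl⟩
  · rw [ZMod.val_add_one]
    exact (h _ w.val_lt).symm
  · rw [ZMod.val_add_one]
    exact h _ u.val_lt

lemma cycleG_hasColorfulPathFrom_comp_val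
    (h : ∀ j < n, ∃ a < n, (j = a ∨ j = (a + 2) % n) ∧
      [c a, c ((a + 1) % n), c ((a + 2) % n)].Nodup)
    (x : ZMod n) : (cycleG n).HasColorfulPathFrom (c ∘ ZMod.val) x := by
  obtain ⟨a, ha, hx, hnodup⟩ := h x.val x.val_lt
  have hval₀ : (a : ZMod n).val = a := ZMod.val_cast_of_lt ha
  have hval₁ : ((a : ZMod n) + 1).val = (a + 1) % n := by simpa using ZMod.val_natCast n (a + 1)
  have hval₂ : ((a : ZMod n) + 2).val = (a + 2) % n := by simpa using ZMod.val_natCast n (a + 2)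
  obtain ⟨hfrom₀, hfrom₂⟩ := cycleG_hasColorfulPathFrom_of_nodup (c := c ∘ ZMod.val)
    (y := (a : ZMod n)) (by simpa only [Function.comp_apply, hval₀, hval₁, hval₂])
  rcases hx with hx | hx
  · rwa [← ZMod.val_injective n (hx.trans hval₀.symm)] at hfrom₀
  · rwa [← ZMod.val_injective n (hx.trans hval₂.symm)] at hfrom₂

end Cycle

section OddCycleColoring

/-- Vertex `j` is `v_j` for `j ≤ k` and `v'_{2k+1-j}` otherwise, so `v'_k` is `k + 1`; label `0`
stands for colour 3. -/
def oddCycleLabel (k j : ℕ) : ℕ :=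
  if j ≤ k then j else if j = k + 1 then k + 1 else 2 * k + 1 - j

def oddCycleColor (k j : ℕ) : Fin 3 := Fin.ofNat 3 (oddCycleLabel k j)

variable {k j : ℕ}

lemma oddCycleColor_ne_succ (hk : 1 ≤ k) (hj : j < 2 * k + 1) :
    oddCycleColor k j ≠ oddCycleColor k ((j + 1) % (2 * k + 1)) := by
  rw [Nat.add_mod_eq_ite, Nat.mod_eq_of_lt hj, Nat.mod_eq_of_lt (by omega : 1 < 2 * k + 1)]
  simp only [oddCycleColor, oddCycleLabel, ne_eq, Fin.ext_iff, Fin.val_ofNat]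
  split_ifs <;> omega

lemma nodup_oddCycleColor_three {a : ℕ} (hk : 1 ≤ k) (hk3 : k ≠ 3) (ha : a < 2 * k + 1)
    (h : a ≠ k + 1 ∧ a ≠ 2 * k ∨ a = k - 1 ∨ a = 2 * k - 2) :
    [oddCycleColor k a, oddCycleColor k ((a + 1) % (2 * k + 1)),
      oddCycleColor k ((a + 2) % (2 * k + 1))].Nodup := by
  rw [Nat.add_mod_eq_ite, Nat.add_mod_eq_ite, Nat.mod_eq_of_lt ha,
    Nat.mod_eq_of_lt (by omega : 1 < 2 * k + 1), Nat.mod_eq_of_lt (by omega : 2 < 2 * k + 1)]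
  simp only [List.nodup_cons, List.mem_cons, List.not_mem_nil, List.nodup_nil, or_false, not_or,
    not_false_eq_true, and_true, oddCycleColor, Fin.ext_iff, Fin.val_ofNat, oddCycleLabel]
  split_ifs <;> omega

lemma exists_nodup_oddCycleColor (hk : 1 ≤ k) (hk3 : k ≠ 3) (hj : j < 2 * k + 1) :
    ∃ a < 2 * k + 1, (j = a ∨ j = (a + 2) % (2 * k + 1)) ∧
      [oddCycleColor k a, oddCycleColor k ((a + 1) % (2 * k + 1)),
        oddCycleColor k ((a + 2) % (2 * k + 1))].Nodup := by
  by_cases hback : j = k + 1 ∨ j = 2 * k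
  · refine ⟨j - 2, by omega, .inr ?_, nodup_oddCycleColor_three hk hk3 (by omega) (by omega)⟩
    rw [Nat.mod_eq_of_lt (by omega)]
    omega
  · exact ⟨j, hj, .inl rfl, nodup_oddCycleColor_three hk hk3 hj (by omega)⟩

end OddCycleColoring

/-- Every odd cycle `C_{2k+1}` with `k ≥ 1`, `k ≠ 3` (that is, other than
`C_7`) admits a proper 3-coloring in which every vertex begins a path on 3
vertices using all three colors. -/
theorem odd_cycle_colorful (k : ℕ) (hk : 1 ≤ k) (hk3 : k ≠ 3) :
    ∃ c : ZMod (2 * k + 1) → Fin 3,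
      (∀ u w, (cycleG (2 * k + 1)).Adj u w → c u ≠ c w) ∧
      ∀ v, ∃ (y : ZMod (2 * k + 1)) (p : (cycleG (2 * k + 1)).Walk v y),
        p.support.length = 3 ∧ (p.support.map c).Nodup :=
  ⟨oddCycleColor k ∘ ZMod.val,
    fun _ _ => cycleG_adj_comp_val_ne fun _ hj => oddCycleColor_ne_succ hk hj,
    cycleG_hasColorfulPathFrom_comp_val fun _ hj => exists_nodup_oddCycleColor hk hk3 hj⟩
end

section
/- Let G be a minimal counterexample (with respect to number of vertices) among connected 3-chromatic graphs other than C_7 that admit no proper 3-coloring in which every vertex begins a colorful path. Then G contains no pair of twins, i.e., no two distinct vertices x, y with N_G(x) = N_G(y). -/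
/-- `H` admits a proper 3-coloring in which every vertex is the beginning of a
colorful path (a path on 3 vertices using all three colors). -/
def GoodColoring {W : Type} (H : SimpleGraph W) : Prop :=
  ∃ c : W → Fin 3,
    (∀ u w, H.Adj u w → c u ≠ c w) ∧
    ∀ v : W, ∃ (y : W) (p : H.Walk v y),
      p.support.length = 3 ∧ (p.support.map c).Nodup

/-!
If `y` is a twin of `x`, then `G` is the pullback of `G - y` along the surjection sending `y` to
`x` and fixing every other vertex. Pullback along a surjection preserves the chromatic number,
connectivity descends from it, and good colorings lift to it, since a colorful path from `f v`
lifts to one from `v`. So `G - y` is a smaller connected 3-chromatic graph without a good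
coloring, hence `C_7`; but then `G` is `C_7` with a doubled vertex, which has an explicit good
coloring.
-/

open SimpleGraph Function

variable {V W : Type}

theorem goodColoring_iff {H : SimpleGraph W} :
    GoodColoring H ↔ ∃ c : W → Fin 3, (∀ u w, H.Adj u w → c u ≠ c w) ∧
      ∀ v, ∃ a b, H.Adj v a ∧ H.Adj a b ∧ [c v, c a, c b].Nodup := by
  refine exists_congr fun c => and_congr_right fun _ => forall_congr' fun v => ⟨?_, ?_⟩
  · rintro ⟨z, _ | ⟨h₁, _ | ⟨h₂, _ | ⟨_, _⟩⟩⟩, hlen, hnd⟩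
    · simp at hlen
    · simp at hlen
    · exact ⟨_, _, h₁, h₂, by simpa using hnd⟩
    · simp at hlen
  · rintro ⟨a, b, hva, hab, hnd⟩
    exact ⟨b, .cons hva (.cons hab .nil), rfl, by simpa using hnd⟩

theorem GoodColoring.comap {H : SimpleGraph W} {f : V → W} (hf : Surjective f)
    (h : GoodColoring H) : GoodColoring (H.comap f) := by
  rw [goodColoring_iff] at h ⊢
  obtain ⟨c, hc, hpath⟩ := h
  refine ⟨c ∘ f, fun u w huw => hc _ _ huw, fun v => ?_⟩
  obtain ⟨a, b, hva, hab, hnd⟩ := hpath (f v)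
  obtain ⟨a, rfl⟩ := hf a
  obtain ⟨b, rfl⟩ := hf b
  exact ⟨a, b, hva, hab, hnd⟩

theorem chromaticNumber_comap_of_surjective {H : SimpleGraph W} {f : V → W}
    (hf : Surjective f) : (H.comap f).chromaticNumber = H.chromaticNumber :=
  le_antisymm (chromaticNumber_mono_of_hom (Hom.comap f H))
    (chromaticNumber_mono_of_hom ⟨surjInv hf, fun {a b} h => by
      simpa [surjInv_eq hf] using h⟩)

theorem connected_of_connected_comap {H : SimpleGraph W} {f : V → W} (hf : Surjective f)
    (h : (H.comap f).Connected) : H.Connected :=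
  h.map (Hom.comap f H) hf

instance (n : ℕ) : DecidableRel (cycleG n).Adj := fun i j =>
  inferInstanceAs (Decidable (i ≠ j ∧ (i = j + 1 ∨ j = i + 1)))

theorem cycleG_comap_sub (n : ℕ) (a : ZMod n) : (cycleG n).comap (· - a) = cycleG n := by
  ext i j
  simp [cycleG, sub_add_eq_add_sub]

/-- `C_7` together with a twin `none` of the vertex `0`. -/
abbrev cycleSevenWithTwin : SimpleGraph (Option (ZMod 7)) := (cycleG 7).comap (·.getD 0)

theorem goodColoring_cycleSevenWithTwin : GoodColoring cycleSevenWithTwin := by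
  rw [goodColoring_iff]
  exact ⟨fun p => p.elim 2 ![0, 1, 2, 0, 2, 0, 1], by decide, by decide⟩

theorem goodColoring_comap_cycleG_seven {f : V → ZMod 7} (hf : Surjective f)
    (hf' : ¬ Injective f) : GoodColoring ((cycleG 7).comap f) := by
  classical
  obtain ⟨u, w, hfuw, huw⟩ : ∃ u w, f u = f w ∧ u ≠ w := by simpa [Injective] using hf'
  -- after rotating `f u` to `0`, the vertex `u` plays the twin `none` and `w` plays `some 0`
  let g : V → Option (ZMod 7) := fun v => if v = u then none else some (f v - f u)
  have hg : Surjective g := by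
    rintro (_ | i)
    · exact ⟨u, if_pos rfl⟩
    · obtain ⟨v, hv⟩ := hf (i + f u)
      by_cases hvu : v = u
      · subst hvu
        exact ⟨w, by simpa [g, huw.symm, ← hfuw, eq_comm] using hv⟩
      · exact ⟨v, by simp [g, hvu, hv]⟩
  have hg_getD : (·.getD 0) ∘ g = (· - f u) ∘ f := by
    funext v
    by_cases hvu : v = u <;> simp [g, hvu]
  have hcomap : cycleSevenWithTwin.comap g = (cycleG 7).comap f := by
    rw [comap_comap, hg_getD, ← comap_comap, cycleG_comap_sub]
  exact hcomap ▸ goodColoring_cycleSevenWithTwin.comap hg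

def collapse [DecidableEq V] {x y : V} (hxy : x ≠ y) (v : V) : ({y}ᶜ : Set V) :=
  if h : v = y then ⟨x, hxy⟩ else ⟨v, h⟩

theorem collapse_surjective [DecidableEq V] {x y : V} (hxy : x ≠ y) :
    Surjective (collapse hxy) :=
  fun ⟨v, hv⟩ => ⟨v, dif_neg hv⟩

theorem comap_collapse_eq_of_neighborSet_eq [DecidableEq V] {G : SimpleGraph V} {x y : V}
    (hxy : x ≠ y) (hN : G.neighborSet x = G.neighborSet y) :
    (G.induce {y}ᶜ).comap (collapse hxy) = G := by
  have hadj : ∀ v, G.Adj x v ↔ G.Adj y v := fun v => Set.ext_iff.mp hN v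
  ext u v
  by_cases hu : u = y <;> by_cases hv : v = y <;> simp [collapse, hu, hv, hadj, G.adj_comm u]

theorem min_counterexample_no_twins_general {V : Type} [Fintype V] (G : SimpleGraph V)
    (hG : G.Connected) (hχ : G.chromaticNumber = 3)
    (hbad : ¬ GoodColoring G)
    (hmin : ∀ (W : Type) [Fintype W] (H : SimpleGraph W),
        Fintype.card W < Fintype.card V → H.Connected →
        H.chromaticNumber = 3 → ¬ Nonempty (H ≃g cycleG 7) → GoodColoring H) :
    ∀ x y : V, x ≠ y → G.neighborSet x ≠ G.neighborSet y := by
  classical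
  intro x y hxy hN
  have hsurj := collapse_surjective hxy
  have hG' := comap_collapse_eq_of_neighborSet_eq hxy hN
  suffices GoodColoring ((G.induce {y}ᶜ).comap (collapse hxy)) from hbad (hG' ▸ this)
  by_cases hC7 : Nonempty (G.induce {y}ᶜ ≃g cycleG 7)
  · obtain ⟨e⟩ := hC7
    rw [← e.toEmbedding.comap_eq, comap_comap]
    refine goodColoring_comap_cycleG_seven (e.surjective.comp hsurj) fun hinj => hxy (hinj ?_)
    simp [collapse, hxy]
  · refine (hmin _ _ ?_ ?_ ?_ hC7).comap hsurj
    · exact Fintype.card_subtype_lt (x := y) (by simp)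
    · exact connected_of_connected_comap hsurj (by rwa [hG'])
    · rw [← chromaticNumber_comap_of_surjective hsurj, hG', hχ]

/-- A minimal counterexample among connected 3-chromatic graphs other than
`C_7` contains no pair of twins. -/
theorem min_counterexample_no_twins {V : Type} [Fintype V] (G : SimpleGraph V)
    (hG : G.Connected) (hχ : G.chromaticNumber = 3)
    (hC7 : ¬ Nonempty (G ≃g cycleG 7))
    (hbad : ¬ GoodColoring G)
    (hmin : ∀ (W : Type) [Fintype W] (H : SimpleGraph W),
        Fintype.card W < Fintype.card V → H.Connected →
        H.chromaticNumber = 3 → ¬ Nonempty (H ≃g cycleG 7) → GoodColoring H) :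
    ∀ x y : V, x ≠ y → G.neighborSet x ≠ G.neighborSet y :=
  min_counterexample_no_twins_general G hG hχ hbad hmin
end

section
/- Let c be a nice 3-coloring of a connected 3-chromatic graph G, let r be the unique sink of D_c, and let b ∈ B_c (a vertex with no colorful path). Then the unique out-neighbour of b in D_c is r, every in-neighbour of b is a source of D_c, and the set {b} ∪ N^-_{D_c}(b) is an initial section of D_c. -/
section Digraph

variable {V : Type} {D : V → V → Prop}

lemma exists_isChain_cons_append_of_transGen {x y : V} (h : Relation.TransGen D x y) :
    ∃ l : List V, List.IsChain D (x :: (l ++ [y])) := by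
  induction h with
  | single h => exact ⟨[], .cons_cons h (.singleton _)⟩
  | @tail m z _ hmz ih =>
    obtain ⟨l, hl⟩ := ih
    exact ⟨l ++ [m], by simpa using ⟨hl, hmz⟩⟩

lemma not_transGen_self_of_not_hasDCycle (hacyc : ¬ HasDCycle D) (x : V) :
    ¬ Relation.TransGen D x x := fun h =>
  hacyc ⟨x, exists_isChain_cons_append_of_transGen h⟩

lemma reflTransGen_of_unique_sink [Finite V] (hacyc : ¬ HasDCycle D) {r : V}
    (hru : ∀ x, (∀ y, ¬ D x y) → x = r) (x : V) : Relation.ReflTransGen D x r := by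
  have : Std.Irrefl (flip (Relation.TransGen D)) :=
    ⟨not_transGen_self_of_not_hasDCycle hacyc⟩
  have : IsTrans V (flip (Relation.TransGen D)) := ⟨fun _ _ _ h₁ h₂ => h₂.trans h₁⟩
  induction x using (Finite.wellFounded_of_trans_of_irrefl (flip (Relation.TransGen D))).induction
    with
  | _ x ih =>
    by_cases hsink : ∀ y, ¬ D x y
    · rw [hru x hsink]
    · obtain ⟨y, hxy⟩ := not_forall_not.1 hsink
      exact .head hxy (ih y (.single hxy))

lemma exists_arc_arc_of_reflTransGen {t u w r : V} (htu : D t u) (huw : D u w)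
    (hwr : Relation.ReflTransGen D w r) : ∃ p q, D p q ∧ D q r := by
  induction hwr using Relation.ReflTransGen.head_induction_on generalizing t u with
  | refl => exact ⟨t, u, htu, huw⟩
  | head hwv _ ih => exact ih huw hwv

lemma exists_arc_arc_into_unique_sink [Finite V] (hacyc : ¬ HasDCycle D) {r : V}
    (hru : ∀ x, (∀ y, ¬ D x y) → x = r) {l : List V} (hl : l.IsChain D) (hlen : 3 ≤ l.length) :
    ∃ p q, D p q ∧ D q r := by
  match l, hlen with
  | t :: u :: w :: _, _ =>
    simp only [List.isChain_cons_cons] at hl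
    exact exists_arc_arc_of_reflTransGen hl.1 hl.2.1 (reflTransGen_of_unique_sink hacyc hru w)

end Digraph

section Colorful

variable {V α : Type} (G : SimpleGraph V) (c : V → α)

def HasColorfulPathFrom (b : V) : Prop :=
  ∃ (y : V) (p : G.Walk b y), p.support.length = 3 ∧ (p.support.map c).Nodup

variable {G c}

lemma HasColorfulPathFrom.of_adj_adj {x y z : V} (hxy : G.Adj x y) (hyz : G.Adj y z)
    (hcol : [c x, c y, c z].Nodup) : HasColorfulPathFrom G c x :=
  ⟨z, .cons hxy (.cons hyz .nil), rfl, hcol⟩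

end Colorful

lemma ZMod.nodup_add_one_add_one (a : ZMod 3) : [a, a + 1, a + 1 + 1].Nodup := by
  revert a; decide

theorem Bc_structure_general {V : Type} [Fintype V] (G : SimpleGraph V)
    (c : V → ZMod 3)
    (D : V → V → Prop) (hD : D = fun a b => G.Adj a b ∧ c b = c a + 1)
    (hacyc : ¬ HasDCycle D)
    (r : V) (hru : ∀ x, (∀ y, ¬ D x y) → x = r)
    (hheight : ∃ l : List V, l.Chain' D ∧ l.length = 5)
    (b : V)
    (hb : ¬ ∃ (y : V) (p : G.Walk b y),
        p.support.length = 3 ∧ (p.support.map c).Nodup) :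
    (D b r ∧ ∀ y, D b y → y = r) ∧
    (∀ y, D y b → ∀ z, ¬ D z y) ∧
    (∀ u w, (u ≠ b ∧ ¬ D u b) → (w = b ∨ D w b) → ¬ D u w) := by
  have no_out : ∀ y, D b y → ∀ z, ¬ D y z := by
    subst hD
    rintro y ⟨hby, hcy⟩ z ⟨hyz, hcz⟩
    refine hb (HasColorfulPathFrom.of_adj_adj hby hyz ?_)
    rw [hcz, hcy]
    exact ZMod.nodup_add_one_add_one (c b)
  have no_in : ∀ y, D y b → ∀ z, ¬ D z y := by
    subst hD
    rintro y ⟨hyb, hcb⟩ z ⟨hzy, hcy⟩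
    refine hb (HasColorfulPathFrom.of_adj_adj hyb.symm hzy.symm ?_)
    rw [hcb, hcy]
    exact List.nodup_reverse.2 (ZMod.nodup_add_one_add_one (c z))
  have out_eq_r : ∀ y, D b y → y = r := fun y hby => hru y (no_out y hby)
  obtain ⟨y, hby⟩ : ∃ y, D b y := by
    by_contra! hsink
    obtain ⟨l, hl, hlen⟩ := hheight
    obtain ⟨p, q, hpq, hqr⟩ := exists_arc_arc_into_unique_sink hacyc hru hl (by omega)
    exact no_in q (hru b hsink ▸ hqr) p hpq
  refine ⟨⟨out_eq_r y hby ▸ hby, out_eq_r⟩, no_in, ?_⟩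
  rintro u w ⟨-, hub⟩ (rfl | hwb)
  exacts [hub, no_in w hwb u]

/-- For a nice 3-coloring `c` of a connected 3-chromatic graph `G` with unique
sink `r` and height at least 5, every vertex `b` with no colorful path has `r`
as its unique out-neighbour, all its in-neighbours are sources, and
`{b} ∪ N⁻(b)` is an initial section of `D_c`. -/
theorem Bc_structure {V : Type} [Fintype V] (G : SimpleGraph V)
    (hG : G.Connected) (hχ : G.chromaticNumber = 3)
    (c : V → ZMod 3) (hc : ∀ u w, G.Adj u w → c u ≠ c w)
    (D : V → V → Prop) (hD : D = fun a b => G.Adj a b ∧ c b = c a + 1)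
    (hacyc : ¬ HasDCycle D)
    (r : V) (hr : ∀ y, ¬ D r y) (hru : ∀ x, (∀ y, ¬ D x y) → x = r)
    (hheight : ∃ l : List V, l.Chain' D ∧ l.length = 5)
    (b : V)
    (hb : ¬ ∃ (y : V) (p : G.Walk b y),
        p.support.length = 3 ∧ (p.support.map c).Nodup) :
    (D b r ∧ ∀ y, D b y → y = r) ∧
    (∀ y, D y b → ∀ z, ¬ D z y) ∧
    (∀ u w, (u ≠ b ∧ ¬ D u b) → (w = b ∨ D w b) → ¬ D u w) :=
  Bc_structure_general G c D hD hacyc r hru hheight b hb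
end

section
/- Every 4-chromatic graph G containing a cycle of length 4 admits a proper 4-coloring such that every vertex of G is the beginning of a path on 4 vertices whose vertices receive all four colors. -/
/-!
Colour with `ZMod 4` and call `u → w` a successor edge when `w` is a neighbour of `u` whose
colour is that of `u` plus one. If every vertex has a successor edge, following three of them
from any vertex gives a path coloured `t, t + 1, t + 2, t + 3`.

Such a colouring is reached from any colouring with a cycle of successor edges by repeatedly
raising by one the colour of a vertex without successor. Lifting the raises to integers, they
never wrap around an edge, vertices of the cycle are never raised, and connectivity bounds all
raises, so the process stops.

A colouring with a successor cycle comes from the 4-cycle. If no colouring had one, then for any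
two vertices `x ≠ y` of the same colour the successor-closure of one of them misses the other,
and raising that closure by one is a proper colouring separating `x` and `y`. Doing this for both
diagonals makes the 4-cycle rainbow, and after permuting the colours a rainbow 4-cycle is a
successor cycle in one of its two directions.
-/

lemma ZMod.exists_perm_eq_zero_eq_two :
    ∀ a b : ZMod 4, a ≠ b → ∃ e : Equiv.Perm (ZMod 4), e a = 0 ∧ e b = 2 := by
  decide

lemma ZMod.nodup_map_add_natCast_range {k : ℕ} (t : ZMod k) :
    ((List.range k).map fun i : ℕ ↦ t + i).Nodup := by
  refine List.nodup_range.map_on fun i hi j hj hij ↦ ?_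
  rw [List.mem_range] at hi hj
  have := (ZMod.natCast_eq_natCast_iff' i j k).1 (add_left_cancel hij)
  rwa [Nat.mod_eq_of_lt hi, Nat.mod_eq_of_lt hj] at this

namespace SimpleGraph.Coloring

open Relation

variable {V : Type*} {G : SimpleGraph V} {k : ℕ}

def SuccAdj (C : G.Coloring (ZMod k)) (u w : V) : Prop := G.Adj u w ∧ C w = C u + 1

def HasSuccCycle (C : G.Coloring (ZMod k)) : Prop := ∃ v, TransGen C.SuccAdj v v

def IsSuccClosed (C : G.Coloring (ZMod k)) (R : Set V) : Prop :=
  ∀ u ∈ R, ∀ w, C.SuccAdj u w → w ∈ R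

section Shift

variable (C : G.Coloring (ZMod k)) {R : Set V}

noncomputable def shift (R : Set V) (hR : C.IsSuccClosed R) : G.Coloring (ZMod k) :=
  Coloring.mk (fun v ↦ C v + R.indicator 1 v) fun {u w} huw ↦ by
    have hne := C.valid huw
    by_cases hu : u ∈ R <;> by_cases hw : w ∈ R <;>
      simp only [Set.indicator_of_mem, Set.indicator_of_notMem, hu, hw, not_false_eq_true,
        Pi.one_apply, add_zero, ne_eq, add_left_inj]
    · exact hne
    · exact fun h ↦ hw (hR u hu w ⟨huw, h.symm⟩)
    · exact fun h ↦ hu (hR w hw u ⟨huw.symm, h⟩)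
    · exact hne

lemma shift_apply (hR : C.IsSuccClosed R) (v : V) : C.shift R hR v = C v + R.indicator 1 v :=
  rfl

lemma isSuccClosed_setOf_reflTransGen (x : V) : C.IsSuccClosed {w | ReflTransGen C.SuccAdj x w} :=
  fun _ hu _ huw ↦ ReflTransGen.tail hu huw

theorem exists_isSuccClosed_mem_iff_notMem (hC : ¬ C.HasSuccCycle) {x y : V} (hxy : x ≠ y) :
    ∃ R, C.IsSuccClosed R ∧ (x ∈ R ↔ y ∉ R) := by
  by_cases hx : ReflTransGen C.SuccAdj x y
  · by_cases hy : ReflTransGen C.SuccAdj y x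
    · have hx' : TransGen C.SuccAdj x y :=
        (reflTransGen_iff_eq_or_transGen.1 hx).resolve_left hxy.symm
      exact (hC ⟨x, hx'.trans_left hy⟩).elim
    · exact ⟨_, C.isSuccClosed_setOf_reflTransGen y, by simpa [ReflTransGen.refl] using hy⟩
  · exact ⟨_, C.isSuccClosed_setOf_reflTransGen x, by simpa [ReflTransGen.refl] using hx⟩

lemma shift_ne_of_eq [Fact (1 < k)] (hR : C.IsSuccClosed R) {x y : V} (h : C x = C y)
    (hxy : x ∈ R ↔ y ∉ R) : C.shift R hR x ≠ C.shift R hR y := by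
  by_cases hx : x ∈ R <;> simp_all [shift_apply]

lemma shift_ne_of_eq_add_two (C : G.Coloring (ZMod 4)) (hR : C.IsSuccClosed R) {x y : V}
    (h : C y = C x + 2) : C.shift R hR x ≠ C.shift R hR y := by
  rw [shift_apply, shift_apply, h]
  by_cases hx : x ∈ R <;> by_cases hy : y ∈ R <;> simp only [Set.indicator_of_mem,
    Set.indicator_of_notMem, hx, hy, not_false_eq_true, Pi.one_apply] <;>
    generalize C x = t <;> revert t <;> decide

end Shift

section FourCycle

variable {x₁ x₂ x₃ x₄ : V}

lemma hasSuccCycle_of_adj_of_eq (C : G.Coloring (ZMod 4)) (h₁₂ : G.Adj x₁ x₂)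
    (h₂₃ : G.Adj x₂ x₃) (h₃₄ : G.Adj x₃ x₄) (h₄₁ : G.Adj x₄ x₁) (h₁ : C x₁ = 0) (h₂ : C x₂ = 1)
    (h₃ : C x₃ = 2) (h₄ : C x₄ = 3) : C.HasSuccCycle :=
  ⟨x₁, .head ⟨h₁₂, by rw [h₁, h₂]; decide⟩ <| .head ⟨h₂₃, by rw [h₂, h₃]; decide⟩ <|
    .head ⟨h₃₄, by rw [h₃, h₄]; decide⟩ <| .single ⟨h₄₁, by rw [h₄, h₁]; decide⟩⟩

theorem exists_hasSuccCycle_of_rainbow (C : G.Coloring (ZMod 4)) (h₁₂ : G.Adj x₁ x₂)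
    (h₂₃ : G.Adj x₂ x₃) (h₃₄ : G.Adj x₃ x₄) (h₄₁ : G.Adj x₄ x₁) (h₁₃ : C x₁ ≠ C x₃)
    (h₂₄ : C x₂ ≠ C x₄) : ∃ C' : G.Coloring (ZMod 4), C'.HasSuccCycle := by
  obtain ⟨e, he₁, he₃⟩ := ZMod.exists_perm_eq_zero_eq_two _ _ h₁₃
  set C' := G.recolorOfEquiv e C
  have hC'₁ : C' x₁ = 0 := by simpa [C'] using he₁
  have hC'₃ : C' x₃ = 2 := by simpa [C'] using he₃
  have hC'₂₄ : C' x₂ ≠ C' x₄ := by simpa [C'] using h₂₄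
  -- the diagonals are coloured `{0, 2}` and `{1, 3}`
  have key : (C' x₂ = 1 ∧ C' x₄ = 3) ∨ (C' x₂ = 3 ∧ C' x₄ = 1) := by
    have h₁₂' := C'.valid h₁₂; have h₂₃' := C'.valid h₂₃
    have h₃₄' := C'.valid h₃₄; have h₄₁' := C'.valid h₄₁
    rw [hC'₁, hC'₃] at *
    revert hC'₂₄ h₁₂' h₂₃' h₃₄' h₄₁'
    generalize C' x₂ = p; generalize C' x₄ = q
    revert p q; decide
  rcases key with ⟨hC'₂, hC'₄⟩ | ⟨hC'₂, hC'₄⟩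
  · exact ⟨C', C'.hasSuccCycle_of_adj_of_eq h₁₂ h₂₃ h₃₄ h₄₁ hC'₁ hC'₂ hC'₃ hC'₄⟩
  · exact ⟨C', C'.hasSuccCycle_of_adj_of_eq h₄₁.symm h₃₄.symm h₂₃.symm h₁₂.symm
      hC'₁ hC'₄ hC'₃ hC'₂⟩

theorem exists_hasSuccCycle_of_cycle4 (C : G.Coloring (ZMod 4)) (h₁₂ : G.Adj x₁ x₂)
    (h₂₃ : G.Adj x₂ x₃) (h₃₄ : G.Adj x₃ x₄) (h₄₁ : G.Adj x₄ x₁) (h₁₃ : x₁ ≠ x₃) (h₂₄ : x₂ ≠ x₄) :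
    ∃ C' : G.Coloring (ZMod 4), C'.HasSuccCycle := by
  have : Fact (1 < 4) := ⟨by decide⟩
  by_contra! hno
  obtain ⟨C₁, hC₁⟩ : ∃ C₁ : G.Coloring (ZMod 4), C₁ x₃ = C₁ x₁ + 2 := by
    obtain ⟨C₀, hC₀⟩ : ∃ C₀ : G.Coloring (ZMod 4), C₀ x₁ ≠ C₀ x₃ := by
      by_cases h : C x₁ = C x₃
      · obtain ⟨R, hR, hmem⟩ := C.exists_isSuccClosed_mem_iff_notMem (hno C) h₁₃
        exact ⟨C.shift R hR, C.shift_ne_of_eq hR h hmem⟩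
      · exact ⟨C, h⟩
    obtain ⟨e, he₁, he₃⟩ := ZMod.exists_perm_eq_zero_eq_two _ _ hC₀
    exact ⟨G.recolorOfEquiv e C₀, by simp [he₁, he₃]⟩
  by_cases h : C₁ x₂ = C₁ x₄
  · obtain ⟨R, hR, hmem⟩ := C₁.exists_isSuccClosed_mem_iff_notMem (hno C₁) h₂₄
    obtain ⟨C', hC'⟩ := exists_hasSuccCycle_of_rainbow (C₁.shift R hR) h₁₂ h₂₃ h₃₄ h₄₁
      (C₁.shift_ne_of_eq_add_two hR hC₁) (C₁.shift_ne_of_eq hR h hmem)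
    exact hno C' hC'
  · obtain ⟨C', hC'⟩ := exists_hasSuccCycle_of_rainbow C₁ h₁₂ h₂₃ h₃₄ h₄₁ (by simp [hC₁]; decide) h
    exact hno C' hC'

end FourCycle

section Raise

variable (C : G.Coloring (ZMod k)) {m : V → ℕ}

/-- The colour difference of the raised colouring `C + m` along `u → w`, lifted to `ℤ`;
admissibility of `m` says that it stays in `(0, k)`, i.e. the raises never wrap around an edge. -/
def liftDiff (m : V → ℕ) (u w : V) : ℤ := (C w - C u).val + m w - m u

def IsAdmissibleRaise (m : V → ℕ) : Prop := ∀ u w, G.Adj u w → 0 < C.liftDiff m u w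

lemma liftDiff_add_liftDiff [NeZero k] (m : V → ℕ) {u w : V} (h : G.Adj u w) :
    C.liftDiff m u w + C.liftDiff m w u = k := by
  have : NeZero (C w - C u) := ⟨sub_ne_zero.2 (C.valid h).symm⟩
  have hneg := ZMod.val_neg_of_ne_zero (C w - C u)
  rw [neg_sub] at hneg
  have := (C w - C u).val_lt
  simp only [liftDiff]
  omega

lemma intCast_liftDiff [NeZero k] (m : V → ℕ) (u w : V) :
    (C.liftDiff m u w : ZMod k) = (C w + m w) - (C u + m u) := by
  simp only [liftDiff, Int.cast_sub, Int.cast_add, Int.cast_natCast, ZMod.natCast_zmod_val]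
  ring

lemma isAdmissibleRaise_zero : C.IsAdmissibleRaise 0 := fun u w h ↦ by
  have := ZMod.val_pos.2 (sub_ne_zero.2 (C.valid h).symm)
  simp only [liftDiff, Pi.zero_apply, Nat.cast_zero]
  omega

lemma raise_ne [NeZero k] (hm : C.IsAdmissibleRaise m) {u w : V} (h : G.Adj u w) :
    C u + m u ≠ C w + m w := by
  intro heq
  have hdvd : (k : ℤ) ∣ C.liftDiff m u w := by
    rw [← ZMod.intCast_zmod_eq_zero_iff_dvd, intCast_liftDiff, heq, sub_self]
  have hlt : C.liftDiff m u w < k := by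
    linarith [C.liftDiff_add_liftDiff m h, hm w u h.symm]
  exact (hm u w h).ne' (Int.eq_zero_of_dvd_of_nonneg_of_lt (hm u w h).le hlt hdvd)

def raise [NeZero k] (m : V → ℕ) (hm : C.IsAdmissibleRaise m) : G.Coloring (ZMod k) :=
  Coloring.mk (fun v ↦ C v + m v) (C.raise_ne hm)

lemma raise_apply [NeZero k] (hm : C.IsAdmissibleRaise m) (v : V) :
    C.raise m hm v = C v + m v :=
  rfl

variable {C} in
lemma IsAdmissibleRaise.add_single [DecidableEq V] (hm : C.IsAdmissibleRaise m) {v : V}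
    (hv : ∀ w, G.Adj v w → C.liftDiff m v w ≠ 1) : C.IsAdmissibleRaise (m + Pi.single v 1) := by
  intro u w h
  have huw := hm u w h
  simp only [liftDiff, Pi.add_apply, Pi.single_apply] at huw ⊢
  rcases eq_or_ne u v with rfl | hu
  · have := hv w h
    simp only [liftDiff] at this
    rw [if_neg (G.ne_of_adj h).symm, if_pos rfl]
    push_cast
    omega
  · rw [if_neg hu]
    split_ifs <;> push_cast <;> omega

variable {C} in
lemma IsAdmissibleRaise.le_add_mul_length [NeZero k] (hm : C.IsAdmissibleRaise m) {u w : V}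
    (p : G.Walk u w) : m u ≤ m w + k * p.length := by
  induction p with
  | nil => simp
  | @cons u v w h p ih =>
    have hval := (C v - C u).val_lt
    have := hm u v h
    simp only [liftDiff] at this
    rw [Walk.length_cons, Nat.mul_succ]
    omega

theorem exists_forall_exists_succAdj [Fintype V] [NeZero k] (hG : G.Connected)
    (hC : C.HasSuccCycle) :
    ∃ C' : G.Coloring (ZMod k), ∀ v, ∃ w, C'.SuccAdj v w := by
  classical
  -- among admissible raises vanishing on the successor cycle, which connectivity bounds,
  -- one of maximal total leaves no vertex without successor: such a vertex could be raised
  obtain ⟨s, hs⟩ := hC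
  have hS : ∀ v, TransGen C.SuccAdj v s → ∃ w, C.SuccAdj v w ∧ TransGen C.SuccAdj w s :=
    fun v hv ↦ let ⟨w, hvw, hws⟩ := TransGen.head'_iff.1 hv; ⟨w, hvw, TransGen.trans_right hws hs⟩
  let Adm (m : V → ℕ) : Prop := C.IsAdmissibleRaise m ∧ ∀ v, TransGen C.SuccAdj v s → m v = 0
  have hbound (m : V → ℕ) (hm : Adm m) (v : V) : m v < k * G.dist v s + 1 := by
    obtain ⟨p, hp⟩ := hG.exists_walk_length_eq_dist v s
    have := hm.1.le_add_mul_length p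
    rw [hm.2 s hs, hp] at this
    omega
  let cands := (Fintype.piFinset fun v ↦ Finset.range (k * G.dist v s + 1)).filter Adm
  have mem_cands (m : V → ℕ) (hm : Adm m) : m ∈ cands :=
    Finset.mem_filter.2 ⟨Fintype.mem_piFinset.2 fun v ↦ Finset.mem_range.2 (hbound m hm v), hm⟩
  obtain ⟨m, hm, hmax⟩ := cands.exists_max_image (fun m ↦ ∑ v, m v)
    ⟨0, mem_cands 0 ⟨C.isAdmissibleRaise_zero, fun _ _ ↦ rfl⟩⟩
  obtain ⟨hmC, hmS⟩ := (Finset.mem_filter.1 hm).2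
  refine ⟨C.raise m hmC, fun v ↦ ?_⟩
  by_contra! hv
  have hvS : ¬ TransGen C.SuccAdj v s := fun hvs ↦
    let ⟨w, hvw, hws⟩ := hS v hvs
    hv w ⟨hvw.1, by simp [raise_apply, hmS v hvs, hmS w hws, hvw.2]⟩
  have hv' : ∀ w, G.Adj v w → C.liftDiff m v w ≠ 1 := fun w h h1 ↦ hv w ⟨h, by
    rw [raise_apply, raise_apply, ← sub_eq_iff_eq_add', ← intCast_liftDiff, h1, Int.cast_one]⟩
  have hm' : Adm (m + Pi.single v 1) := ⟨hmC.add_single hv', fun w hw ↦ by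
    simp [hmS w hw, show w ≠ v by rintro rfl; exact hvS hw]⟩
  have := hmax _ (mem_cands _ hm')
  simp [Finset.sum_add_distrib] at this

end Raise

theorem exists_walk_support_map_eq (C : G.Coloring (ZMod k)) (hC : ∀ v, ∃ w, C.SuccAdj v w)
    (n : ℕ) (v : V) :
    ∃ (y : V) (p : G.Walk v y), p.support.map C = (List.range (n + 1)).map fun i : ℕ ↦ C v + i := by
  induction n generalizing v with
  | zero => exact ⟨v, .nil, by simp⟩
  | succ n ih =>
    obtain ⟨w, hvw, hc⟩ := hC v
    obtain ⟨y, p, hp⟩ := ih w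
    refine ⟨y, .cons hvw p, ?_⟩
    rw [Walk.support_cons, List.map_cons, hp, hc, List.range_succ_eq_map (n := n + 1),
      List.map_cons, List.map_map, Nat.cast_zero, add_zero]
    refine congrArg _ (List.map_congr_left fun i _ ↦ ?_)
    simp only [Function.comp_apply, Nat.cast_succ]
    ring

end SimpleGraph.Coloring

/-- Every connected 4-chromatic graph containing a cycle of length 4 admits a
proper 4-coloring in which every vertex begins a path on 4 vertices receiving
all four colors. -/
theorem four_chromatic_C4_colorful {V : Type} [Fintype V] (G : SimpleGraph V)
    (hG : G.Connected) (hχ : G.chromaticNumber = 4)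
    (x₁ x₂ x₃ x₄ : V)
    (hdist : x₁ ≠ x₂ ∧ x₁ ≠ x₃ ∧ x₁ ≠ x₄ ∧ x₂ ≠ x₃ ∧ x₂ ≠ x₄ ∧ x₃ ≠ x₄)
    (hcyc : G.Adj x₁ x₂ ∧ G.Adj x₂ x₃ ∧ G.Adj x₃ x₄ ∧ G.Adj x₄ x₁) :
    ∃ c : V → ZMod 4,
      (∀ u w, G.Adj u w → c u ≠ c w) ∧
      ∀ v : V, ∃ (y : V) (p : G.Walk v y),
        p.support.length = 4 ∧ (p.support.map c).Nodup := by
  obtain ⟨-, h₁₃, -, -, h₂₄, -⟩ := hdist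
  obtain ⟨h₁₂, h₂₃, h₃₄, h₄₁⟩ := hcyc
  obtain ⟨C₀⟩ : Nonempty (G.Coloring (ZMod 4)) := G.chromaticNumber_le_iff_colorable.1 hχ.le
  obtain ⟨C₁, hC₁⟩ := C₀.exists_hasSuccCycle_of_cycle4 h₁₂ h₂₃ h₃₄ h₄₁ h₁₃ h₂₄
  obtain ⟨C, hC⟩ := C₁.exists_forall_exists_succAdj hG hC₁
  refine ⟨C, fun _ _ ↦ C.valid, fun v ↦ ?_⟩
  obtain ⟨y, p, hp⟩ := C.exists_walk_support_map_eq hC 3 v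
  exact ⟨y, p, by simpa using congrArg List.length hp, hp ▸ ZMod.nodup_map_add_natCast_range _⟩
end
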